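/- arXiv:2412.09069 — 8 statements merged into one kernel-verified Lean document; each statement's English description precedes it below -/
import Mathlib

section
/- If S is a non-meager subset of the product space ∏_{n<ω}{0,…,b(n)−1}, then for every infinite set D ⊆ ℕ and every point y of the product space, there exists x ∈ S such that x(n) = y(n) for infinitely many n ∈ D. (That is, every non-meager set is unbounded for the relational system LEf_b of local eventual difference.) -/
/-- Every non-meager subset of the product space `∏ₙ Fin (b n)` is unbounded for the
relational system `LEf_b`: for every infinite `D ⊆ ℕ` and every `y`, some `x ∈ S`
agrees with `y` on infinitely many `n ∈ D`. -/
theorem stmt4 (b : ℕ → ℕ) (hb : ∀ n, 2 ^ n ≤ b n)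
    (S : Set ((n : ℕ) → Fin (b n))) (hS : ¬ IsMeagre S) :
    ∀ D : Set ℕ, D.Infinite → ∀ y : (n : ℕ) → Fin (b n),
      ∃ x ∈ S, {n | n ∈ D ∧ x n = y n}.Infinite := by
  intro D hD y
  set A : ℕ → Set ((n : ℕ) → Fin (b n)) :=
    fun m => {x | ∀ n ∈ D, m ≤ n → x n ≠ y n} with hAdef
  have hclosed : ∀ m, IsClosed (A m) := by
    intro m
    have : A m = ⋂ n ∈ {n | n ∈ D ∧ m ≤ n}, (fun x => x n) ⁻¹' {y n}ᶜ := by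
      ext x
      simp only [hAdef, Set.mem_setOf_eq, Set.mem_iInter, Set.mem_preimage,
        Set.mem_compl_iff, Set.mem_singleton_iff]
      tauto
    rw [this]
    exact isClosed_biInter fun n _ =>
      (isClosed_discrete _).preimage (continuous_apply n)
  have hint : ∀ m, interior (A m) = ∅ := by
    intro m
    rw [Set.eq_empty_iff_forall_notMem]
    intro x hx
    obtain ⟨I, u, hu, hsub⟩ := (isOpen_pi_iff.mp isOpen_interior) x hx
    obtain ⟨n, hnD, hn⟩ := (hD.diff ((I.finite_toSet).union (Set.finite_Iio m))).nonempty
    simp only [Set.mem_union, Finset.mem_coe, Set.mem_Iio, not_or, not_lt] at hn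
    have hz : Function.update x n (y n) ∈ (↑I : Set ℕ).pi u := by
      intro i hi
      rw [Function.update_of_ne (by rintro rfl; exact hn.1 hi)]
      exact (hu i hi).2
    have := interior_subset (hsub hz)
    exact this n hnD hn.2 (by simp)
  have hM : IsMeagre (⋃ m, A m) := by
    apply isMeagre_iUnion
    intro m
    rw [isMeagre_iff_countable_union_isNowhereDense]
    refine ⟨{A m}, ?_, Set.countable_singleton _, by simp⟩
    rintro t rfl
    rw [(hclosed m).isNowhereDense_iff]
    exact hint m
  have hnsub : ¬ S ⊆ ⋃ m, A m := fun h => hS (hM.mono h)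
  obtain ⟨x, hxS, hxM⟩ := Set.not_subset.mp hnsub
  refine ⟨x, hxS, Set.infinite_of_forall_exists_gt ?_⟩
  intro a
  simp only [Set.mem_iUnion, not_exists, hAdef, Set.mem_setOf_eq, not_forall] at hxM
  obtain ⟨n, hnD, hna, hxy⟩ := hxM (a + 1)
  exact ⟨n, ⟨hnD, not_not.mp hxy⟩, by omega⟩
end

section
/- For every k ∈ ℕ, every LE-condition (d,s,φ) ∈ Q_k, and every m ∈ ℕ, there exist d′ and s′ such that (d′,s′,φ) ∈ Q_k, (d′,s′,φ) ≤ (d,s,φ) in the extension order, and d′(n) = 1 for some n > m. -/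
open scoped Classical

/-- An LE-condition for the poset `LE_b`: a triple `(d, s, φ)` where `d` is a finite
binary sequence, `s n < b n` for `n < |d|`, `φ n ⊆ {0,…,b n − 1}`, and for some `k`,
`|φ n| ≤ b n · 2^{−n/2^k}` for all `n ≥ |d|`. -/
structure LECond (b : ℕ → ℕ) where
  d : List Bool
  s : ℕ → ℕ
  φ : ℕ → Finset ℕ
  s_lt : ∀ n < d.length, s n < b n
  φ_sub : ∀ n, φ n ⊆ Finset.range (b n)
  bound : ∃ k : ℕ, ∀ n, d.length ≤ n →
    ((φ n).card : ℝ) ≤ (b n : ℝ) * (2 : ℝ) ^ (-(n : ℝ) / (2 : ℝ) ^ k)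

/-- Membership in `Q_k`: the witness `k` works. -/
def LECond.inQ {b : ℕ → ℕ} (p : LECond b) (k : ℕ) : Prop :=
  ∀ n, p.d.length ≤ n →
    ((p.φ n).card : ℝ) ≤ (b n : ℝ) * (2 : ℝ) ^ (-(n : ℝ) / (2 : ℝ) ^ k)

/-- Membership in `Q_{d,s,k}`: in `Q_k` with first two coordinates `d`, `s`. -/
def LECond.inQds {b : ℕ → ℕ} (p : LECond b) (d : List Bool) (s : ℕ → ℕ) (k : ℕ) : Prop :=
  p.d = d ∧ (∀ n < d.length, p.s n = s n) ∧ p.inQ k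

/-- The extension order on LE-conditions: `q ≤ p`. -/
def LECond.le {b : ℕ → ℕ} (q p : LECond b) : Prop :=
  p.d <+: q.d ∧ (∀ n < p.d.length, q.s n = p.s n) ∧ (∀ n, p.φ n ⊆ q.φ n) ∧
  ∀ n, q.d.getD n false = true → ¬ (p.d.getD n false = true) → q.s n ∉ p.φ n

/-- `d` is long for `k`: `|d| ≥ 2` and `2^{−n/2^k} ≤ 1/(n²(n+1)²)` for all `n ≥ |d|`. -/
def LongFor (k : ℕ) (d : List Bool) : Prop :=
  2 ≤ d.length ∧ ∀ n : ℕ, d.length ≤ n →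
    (2 : ℝ) ^ (-(n : ℝ) / (2 : ℝ) ^ k) ≤ 1 / ((n : ℝ) ^ 2 * ((n : ℝ) + 1) ^ 2)

/-! Pad `d` with `0`s up to a position `n > max m (|d| - 1)` and put a `1` there, choosing
`s n ∉ φ n`: such a value below `b n` exists because `|φ n| ≤ b n · 2^{-n/2^k} < b n` for `n > 0`.
Since `φ` is unchanged and `d` only grows, the `Q_k` bound is inherited. -/

theorem List.getD_append_replicate_false_singleton_true (l : List Bool) {n : ℕ}
    (hn : l.length ≤ n) (i : ℕ) :
    (l ++ (List.replicate (n - l.length) false ++ [true])).getD i false =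
      if i < l.length then l.getD i false else decide (i = n) := by
  split_ifs with hi
  · exact List.getD_append _ _ _ _ hi
  · rw [List.getD_append_right _ _ _ _ (not_lt.mp hi)]
    simp only [List.getD_eq_getElem?_getD, List.getElem?_append, List.length_replicate,
      List.getElem?_replicate, List.getElem?_singleton]
    split_ifs <;> simp <;> omega

namespace LECond

variable {b : ℕ → ℕ}

def markAt (p : LECond b) (hb : ∀ i, 0 < b i) (n c : ℕ) (hc : c < b n) : LECond b where
  d := p.d ++ (List.replicate (n - p.d.length) false ++ [true])
  s i := if i < p.d.length then p.s i else if i = n then c else 0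
  φ := p.φ
  s_lt i hi := by
    split_ifs with hL hn
    · exact p.s_lt i hL
    · exact hn ▸ hc
    · exact hb i
  φ_sub := p.φ_sub
  bound := p.bound.imp fun _ h i hi =>
    h i ((List.prefix_append _ _).length_le.trans hi)

variable (p : LECond b) (hb : ∀ i, 0 < b i) {n c : ℕ} (hc : c < b n)

theorem markAt_inQ {k : ℕ} (hp : p.inQ k) : (p.markAt hb n c hc).inQ k := fun i hi =>
  hp i ((List.prefix_append _ _).length_le.trans hi)

theorem markAt_getD (hn : p.d.length ≤ n) (i : ℕ) :
    (p.markAt hb n c hc).d.getD i false =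
      if i < p.d.length then p.d.getD i false else decide (i = n) :=
  List.getD_append_replicate_false_singleton_true p.d hn i

theorem markAt_le (hn : p.d.length ≤ n) (hcφ : c ∉ p.φ n) : (p.markAt hb n c hc).le p := by
  refine ⟨List.prefix_append _ _, fun i hi => if_pos hi, fun _ => subset_rfl, ?_⟩
  intro i hq hpi
  rw [markAt_getD p hb hc hn] at hq
  split_ifs at hq with hi
  · exact absurd hq hpi
  · obtain rfl : i = n := of_decide_eq_true hq
    simpa [markAt, hi] using hcφ

theorem exists_lt_notMem_φ {k : ℕ} (hp : p.inQ k) {n : ℕ} (hL : p.d.length ≤ n) (hn : 0 < n)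
    (hbn : 0 < b n) : ∃ c < b n, c ∉ p.φ n := by
  have hdecay : (2 : ℝ) ^ (-(n : ℝ) / (2 : ℝ) ^ k) < 1 :=
    Real.rpow_lt_one_of_one_lt_of_neg one_lt_two
      (div_neg_of_neg_of_pos (by simp [hn]) (by positivity))
  have hcard : (p.φ n).card < b n := by
    have hbn' : (0 : ℝ) < b n := by exact_mod_cast hbn
    exact_mod_cast (hp n hL).trans_lt (mul_lt_of_lt_one_right hbn' hdecay)
  obtain ⟨c, hc, hcφ⟩ := Finset.exists_mem_notMem_of_card_lt_card
    (hcard.trans_eq (Finset.card_range _).symm)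
  exact ⟨c, Finset.mem_range.mp hc, hcφ⟩

end LECond

/-- Any condition in `Q_k` can be extended, within `Q_k` and keeping `φ`, so that the
new binary sequence takes the value `1` at some `n > m`. -/
theorem stmt5 (b : ℕ → ℕ) (hb : ∀ n, 2 ^ n ≤ b n)
    (k : ℕ) (p : LECond b) (hp : p.inQ k) (m : ℕ) :
    ∃ q : LECond b, q.φ = p.φ ∧ q.inQ k ∧ q.le p ∧
      ∃ n : ℕ, m < n ∧ q.d.getD n false = true := by
  have hbpos : ∀ n, 0 < b n := fun n => (Nat.two_pow_pos n).trans_le (hb n)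
  set n := max (m + 1) p.d.length
  have hLn : p.d.length ≤ n := le_max_right _ _
  have hmn : m < n := Nat.lt_of_succ_le (le_max_left _ _)
  obtain ⟨c, hc, hcφ⟩ := p.exists_lt_notMem_φ hp hLn (by omega) (hbpos n)
  refine ⟨p.markAt hbpos n c hc, rfl, p.markAt_inQ hbpos hc hp, p.markAt_le hbpos hc hLn hcφ,
    n, hmn, ?_⟩
  rw [p.markAt_getD hbpos hc hLn, if_neg (not_lt.mpr hLn)]
  exact decide_eq_true rfl
end

section
/- For every x with x(n) ∈ {0,…,b(n)−1} for all n ∈ ℕ, every k ∈ ℕ, and every LE-condition (d,s,φ) ∈ Q_k, there exists an LE-condition (d′,s′,ψ) with (d′,s′,ψ) ≤ (d,s,φ) in the extension order such that x(n) ∈ ψ(n) for all n ≥ |d′|. -/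
open scoped Classical

lemma key (b : ℕ → ℕ) (hb : ∀ n, 2 ^ n ≤ b n) (k n : ℕ) (hn : 2 ^ (k + 1) ≤ n) :
    (b n : ℝ) * (2 : ℝ) ^ (-(n : ℝ) / (2 : ℝ) ^ k) + 1 ≤
      (b n : ℝ) * (2 : ℝ) ^ (-(n : ℝ) / (2 : ℝ) ^ (k + 1)) := by
  have h2 : (0:ℝ) < 2 := by norm_num
  set A : ℝ := -(n : ℝ) / (2 : ℝ) ^ k with hA
  set B : ℝ := -(n : ℝ) / (2 : ℝ) ^ (k + 1) with hB
  have hdd : (n:ℝ) / (2:ℝ) ^ (k+1) ≤ (n:ℝ) / (2:ℝ) ^ k := by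
    gcongr
    · norm_num
    · exact Nat.le_succ k
  have hAB : A ≤ B := by
    rw [hA, hB, neg_div, neg_div]
    exact neg_le_neg hdd
  have hbn : (2:ℝ) ^ (n:ℝ) ≤ (b n : ℝ) := by
    rw [Real.rpow_natCast]
    exact_mod_cast hb n
  have hk : (1:ℝ) ≤ (2:ℝ) ^ k := one_le_pow₀ (by norm_num)
  have hu : (0:ℝ) ≤ (n:ℝ) + A := by
    have h' : (n:ℝ)/(2:ℝ)^k ≤ (n:ℝ) := div_le_self (by positivity) hk
    rw [hA, neg_div]
    linarith
  have hn' : ((2:ℝ))^(k+1) ≤ (n:ℝ) := by exact_mod_cast hn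
  have hBA : B - A = (n:ℝ) / (2:ℝ) ^ (k+1) := by
    rw [hA, hB]
    field_simp
    ring
  have h1BA : (1:ℝ) ≤ B - A := by
    rw [hBA, le_div_iff₀ (by positivity)]
    linarith
  have e : (2:ℝ) ^ ((n:ℝ) + B) = (2:ℝ) ^ ((n:ℝ) + A) * (2:ℝ) ^ (B - A) := by
    rw [← Real.rpow_add h2]; ring_nf
  have g1 : (1:ℝ) ≤ (2:ℝ) ^ ((n:ℝ) + A) := Real.one_le_rpow one_le_two hu
  have g2 : (2:ℝ) ≤ (2:ℝ) ^ (B - A) := by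
    calc (2:ℝ) = (2:ℝ) ^ (1:ℝ) := (Real.rpow_one 2).symm
    _ ≤ _ := Real.rpow_le_rpow_of_exponent_le one_le_two h1BA
  have h1 : (1:ℝ) ≤ (2:ℝ) ^ (n:ℝ) * ((2:ℝ) ^ B - (2:ℝ) ^ A) := by
    rw [mul_sub, ← Real.rpow_add h2, ← Real.rpow_add h2]
    nlinarith
  have hd : (0:ℝ) ≤ (2:ℝ) ^ B - (2:ℝ) ^ A :=
    sub_nonneg.2 (Real.rpow_le_rpow_of_exponent_le one_le_two hAB)
  nlinarith


/-- For every `x` with `x n < b n` for all `n`, and every condition `(d,s,φ) ∈ Q_k`,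
there is an extension `(d′,s′,ψ)` capturing `x`: `x n ∈ ψ n` for all `n ≥ |d′|`. -/
theorem stmt6 (b : ℕ → ℕ) (hb : ∀ n, 2 ^ n ≤ b n)
    (x : ℕ → ℕ) (hx : ∀ n, x n < b n)
    (k : ℕ) (p : LECond b) (hp : p.inQ k) :
    ∃ q : LECond b, q.le p ∧ ∀ n, q.d.length ≤ n → x n ∈ q.φ n := by
  set N := max p.d.length (2 ^ (k + 1)) with hN
  have hdN : p.d.length ≤ N := le_max_left _ _
  have hkN : 2 ^ (k + 1) ≤ N := le_max_right _ _
  set d' : List Bool := p.d ++ List.replicate (N - p.d.length) false with hd'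
  have hlen : d'.length = N := by
    simp [hd', List.length_append, List.length_replicate]
    omega
  have hgetD : ∀ n, d'.getD n false = p.d.getD n false := by
    intro n
    by_cases h : n < p.d.length
    · simp [hd', List.getD, List.getElem?_append_left h]
    · rcases Nat.lt_or_ge n d'.length with h2 | h2
      · have : d'.getD n false = false := by
          have : d'[n]'(by omega) = false := by
            rw [List.getElem_append_right (by omega)]
            exact List.getElem_replicate ..
          simp [List.getD, List.getElem?_eq_getElem (by omega : n < d'.length), this]
        rw [this, List.getD_eq_default]
        omega
      · rw [List.getD_eq_default _ _ (by omega), List.getD_eq_default _ _ (by omega)]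
  refine ⟨⟨d', fun n => if n < p.d.length then p.s n else 0,
      fun n => insert (x n) (p.φ n), ?_, ?_, ⟨k + 1, ?_⟩⟩, ⟨?_, ?_, ?_, ?_⟩, ?_⟩
  · intro n hn
    by_cases h : n < p.d.length
    · simpa [h] using p.s_lt n h
    · simp only [h, if_false]
      exact lt_of_lt_of_le (pow_pos (by norm_num) n) (hb n)
  · intro n
    exact Finset.insert_subset (Finset.mem_range.2 (hx n)) (p.φ_sub n)
  · intro n hn
    rw [hlen] at hn
    calc ((insert (x n) (p.φ n)).card : ℝ) ≤ (p.φ n).card + 1 := by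
          exact_mod_cast Finset.card_insert_le _ _
    _ ≤ (b n : ℝ) * (2 : ℝ) ^ (-(n : ℝ) / (2 : ℝ) ^ k) + 1 := by
          linarith [hp n (by omega)]
    _ ≤ _ := key b hb k n (by omega)
  · exact ⟨_, hd'.symm⟩
  · intro n hn; simp [hn]
  · intro n; exact Finset.subset_insert _ _
  · intro n h1 h2
    rw [hgetD n] at h1
    exact absurd h1 h2
  · intro n hn
    exact Finset.mem_insert_self _ _
end

section
/- For every finite binary sequence d, every s with s(n) ∈ {0,…,b(n)−1} for n < |d|, every k ∈ ℕ, and every finite list r_0, …, r_{l−1} of LE-conditions in Q_{d,s,k}, there exists an LE-condition that is ≤ r_i in the extension order for every i < l. (That is, each Q_{d,s,k} is centered, and hence the poset LE_b is σ-centered.) -/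
/-!
A common extension of `r 0, …, r (l - 1)` keeps `d` and `s`, pads `d` with zeros (so that no
new constraint on `s` arises) and takes `φ n` to be the union of the `(r i).φ n`. For `n ≥ |d|`
this union has at most `l · b n · 2^(-n/2^k)` elements, and `l · 2^(-n/2^k) ≤ 2^(-n/2^(k+1))`
once `n ≥ 2^(k+1) l`, because `l ≤ 2^l`. Padding `d` to length `2^(k+1) l` therefore makes
`k + 1` a witness for the bound.
-/

open scoped Classical

theorem List.getD_append_replicate_self {α : Type*} (l : List α) (a : α) (m n : ℕ) :
    (l ++ List.replicate m a).getD n a = l.getD n a := by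
  grind

theorem natCast_mul_two_rpow_neg_two_mul_le {l : ℕ} {y : ℝ} (hly : (l : ℝ) ≤ y) :
    (l : ℝ) * (2 : ℝ) ^ (-(2 * y)) ≤ (2 : ℝ) ^ (-y) := by
  have hl : (l : ℝ) ≤ (2 : ℝ) ^ y :=
    calc (l : ℝ) ≤ (2 : ℝ) ^ l := by exact_mod_cast Nat.lt_two_pow_self.le
      _ = (2 : ℝ) ^ (l : ℝ) := (Real.rpow_natCast 2 l).symm
      _ ≤ (2 : ℝ) ^ y := Real.rpow_le_rpow_of_exponent_le one_le_two hly
  have hsplit : (2 : ℝ) ^ (-(2 * y)) = (2 : ℝ) ^ (-y) * ((2 : ℝ) ^ y)⁻¹ := by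
    rw [← Real.rpow_neg zero_le_two, ← Real.rpow_add two_pos]
    ring_nf
  rw [hsplit, mul_left_comm]
  exact mul_le_of_le_one_right (by positivity)
    (mul_inv_le_one_of_le₀ hl (by positivity))

theorem natCast_mul_two_rpow_neg_div_le {k l n : ℕ} (hn : 2 ^ (k + 1) * l ≤ n) :
    (l : ℝ) * (2 : ℝ) ^ (-(n : ℝ) / (2 : ℝ) ^ k) ≤ (2 : ℝ) ^ (-(n : ℝ) / (2 : ℝ) ^ (k + 1)) := by
  have hly : (l : ℝ) ≤ n / 2 ^ (k + 1) := by
    rw [le_div_iff₀ (by positivity), mul_comm]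
    exact_mod_cast hn
  convert natCast_mul_two_rpow_neg_two_mul_le hly using 3 <;> ring

namespace LECond

variable {b : ℕ → ℕ}

theorem card_biUnion_φ_le {k l n : ℕ} {r : ℕ → LECond b} (hr : ∀ i < l, (r i).inQ k)
    (hn : ∀ i < l, (r i).d.length ≤ n) :
    (((Finset.range l).biUnion fun i => (r i).φ n).card : ℝ) ≤
      l * ((b n : ℝ) * (2 : ℝ) ^ (-(n : ℝ) / (2 : ℝ) ^ k)) :=
  calc _ ≤ ∑ i ∈ Finset.range l, (((r i).φ n).card : ℝ) := by
        exact_mod_cast Finset.card_biUnion_le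
    _ ≤ ∑ _i ∈ Finset.range l, (b n : ℝ) * (2 : ℝ) ^ (-(n : ℝ) / (2 : ℝ) ^ k) :=
        Finset.sum_le_sum fun i hi =>
          hr i (Finset.mem_range.1 hi) n (hn i (Finset.mem_range.1 hi))
    _ = _ := by simp

noncomputable def commonExtension (hb : ∀ n, 2 ^ n ≤ b n) (d : List Bool) (s : ℕ → ℕ)
    (hs : ∀ n < d.length, s n < b n) (k l : ℕ) (r : ℕ → LECond b)
    (hr : ∀ i < l, (r i).inQds d s k) : LECond b where
  d := d ++ List.replicate (2 ^ (k + 1) * l - d.length) false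
  s n := if n < d.length then s n else 0
  φ n := (Finset.range l).biUnion fun i => (r i).φ n
  s_lt n _ := by
    split_ifs with hn
    · exact hs n hn
    · exact Nat.one_le_two_pow.trans (hb n)
  φ_sub n := Finset.biUnion_subset.2 fun i _ => (r i).φ_sub n
  bound := ⟨k + 1, fun n hn => by
    have hlen : d.length ≤ n ∧ 2 ^ (k + 1) * l ≤ n := by
      simp only [List.length_append, List.length_replicate] at hn
      omega
    calc _ ≤ l * ((b n : ℝ) * (2 : ℝ) ^ (-(n : ℝ) / (2 : ℝ) ^ k)) :=
          card_biUnion_φ_le (fun i hi => (hr i hi).2.2) fun i hi => (hr i hi).1 ▸ hlen.1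
      _ = b n * (l * (2 : ℝ) ^ (-(n : ℝ) / (2 : ℝ) ^ k)) := by ring
      _ ≤ _ := by gcongr; exact natCast_mul_two_rpow_neg_div_le hlen.2⟩

theorem commonExtension_le (hb : ∀ n, 2 ^ n ≤ b n) (d : List Bool) (s : ℕ → ℕ)
    (hs : ∀ n < d.length, s n < b n) (k l : ℕ) (r : ℕ → LECond b)
    (hr : ∀ i < l, (r i).inQds d s k) {i : ℕ} (hi : i < l) :
    (commonExtension hb d s hs k l r hr).le (r i) := by
  obtain ⟨hd, hs', -⟩ := hr i hi
  refine ⟨hd ▸ List.prefix_append _ _, fun n hn => ?_, fun n => ?_, fun n hn hn' => ?_⟩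
  · rw [hd] at hn
    simp [commonExtension, hn, hs' n hn]
  · exact Finset.subset_biUnion_of_mem (fun j => (r j).φ n) (Finset.mem_range.2 hi)
  · simp only [commonExtension, List.getD_append_replicate_self, ← hd] at hn
    exact absurd hn hn'

end LECond

/-- Each `Q_{d,s,k}` is centered: any finitely many conditions `r 0, …, r (l−1)` in
`Q_{d,s,k}` have a common extension. Hence the poset `LE_b` is σ-centered. -/
theorem stmt7 (b : ℕ → ℕ) (hb : ∀ n, 2 ^ n ≤ b n)
    (d : List Bool) (s : ℕ → ℕ) (hs : ∀ n < d.length, s n < b n) (k : ℕ)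
    (l : ℕ) (r : ℕ → LECond b) (hr : ∀ i < l, (r i).inQds d s k) :
    ∃ q : LECond b, ∀ i < l, q.le (r i) :=
  ⟨_, fun _ => LECond.commonExtension_le hb d s hs k l r hr⟩
end

section
/- Let D be a nonprincipal ultrafilter on ℕ and N ≥ 1. For each j < N let (q^j_m)_{m<ω} be a sequence of LE-conditions in Q_{d,s,k} with q^j_m = (d,s,φ^j_m), and let φ^j_∞ be such that (d,s,φ^j_∞) is an LE-condition and for every n ∈ ℕ the set {m ∈ ℕ : φ^j_m(n) = φ^j_∞(n)} belongs to D. If r is an LE-condition with r ≤ (d,s,φ^j_∞) in the extension order for every j < N, then the set {m ∈ ℕ : there exists an LE-condition that is ≤ r and ≤ q^j_m for every j < N} belongs to D. -/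
open scoped Classical

/-!
Let `K` be a `Q_K`-witness for `r` and all the `q^j_m`, and `L ≥ |r.d|` large. For `D`-almost
every `m` the sets `φ^j_m(n)` and `φ^j_∞(n)` agree for all `n < L` and `j < N`. For such `m`,
`(r.d, r.s, r.φ ∪ ⋃_j φ^j_m)` is a common extension: below `L` the union adds nothing to `r.φ`
(as `r ≤ (d, s, φ^j_∞)`), so `r`'s own size bound applies and `r`'s promises about `φ^j_∞`
transfer to `φ^j_m`; from `L` on, `N + 1` sets of relative size `2^{-n/2^K}` fit into relative
size `2^{-n/2^{K+1}}`.
-/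

open Finset

noncomputable def decay (k n : ℕ) : ℝ := (2 : ℝ) ^ (-(n : ℝ) / (2 : ℝ) ^ k)

lemma decay_pos (k n : ℕ) : 0 < decay k n := by
  unfold decay; positivity

lemma decay_mono (n : ℕ) {k₁ k₂ : ℕ} (h : k₁ ≤ k₂) : decay k₁ n ≤ decay k₂ n := by
  apply Real.rpow_le_rpow_of_exponent_le one_le_two
  rw [neg_div, neg_div, neg_le_neg_iff]
  exact div_le_div_of_nonneg_left (by positivity) (by positivity) (pow_le_pow_right₀ one_le_two h)

lemma decay_succ_mul_self (k n : ℕ) : decay (k + 1) n * decay (k + 1) n = decay k n := by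
  unfold decay
  rw [← Real.rpow_add two_pos, pow_succ]
  congr 1
  field_simp
  ring

lemma mul_decay_le_decay_succ {k c n : ℕ} (hn : 2 ^ (k + 1) * c ≤ n) :
    (c : ℝ) * decay k n ≤ decay (k + 1) n := by
  have hc : (c : ℝ) ≤ (2 : ℝ) ^ ((n : ℝ) / (2 : ℝ) ^ (k + 1)) :=
    calc (c : ℝ) ≤ (2 : ℝ) ^ c := by exact_mod_cast Nat.lt_two_pow_self.le
      _ = (2 : ℝ) ^ (c : ℝ) := (Real.rpow_natCast 2 c).symm
      _ ≤ (2 : ℝ) ^ ((n : ℝ) / (2 : ℝ) ^ (k + 1)) := by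
        apply Real.rpow_le_rpow_of_exponent_le one_le_two
        rw [le_div_iff₀ (by positivity), mul_comm]
        exact_mod_cast hn
  have hinv : (2 : ℝ) ^ ((n : ℝ) / (2 : ℝ) ^ (k + 1)) * decay (k + 1) n = 1 := by
    rw [decay, ← Real.rpow_add two_pos, neg_div, add_neg_cancel, Real.rpow_zero]
  calc (c : ℝ) * decay k n = c * decay (k + 1) n * decay (k + 1) n := by
        rw [mul_assoc, decay_succ_mul_self]
    _ ≤ (2 : ℝ) ^ ((n : ℝ) / (2 : ℝ) ^ (k + 1)) * decay (k + 1) n * decay (k + 1) n := by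
        have := (decay_pos (k + 1) n).le
        gcongr
    _ = decay (k + 1) n := by rw [hinv, one_mul]

lemma card_union_biUnion_le {A : Finset ℕ} {B : ℕ → Finset ℕ} {N : ℕ} {c : ℝ}
    (hA : (#A : ℝ) ≤ c) (hB : ∀ j < N, (#(B j) : ℝ) ≤ c) :
    (#(A ∪ (range N).biUnion B) : ℝ) ≤ (N + 1) * c := by
  have hsum : (∑ j ∈ range N, #(B j) : ℝ) ≤ N * c := by
    simpa using sum_le_sum fun j hj => hB j (mem_range.1 hj)
  calc (#(A ∪ (range N).biUnion B) : ℝ) ≤ #A + ∑ j ∈ range N, #(B j) := by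
        exact_mod_cast (card_union_le _ _).trans (Nat.add_le_add_left card_biUnion_le _)
    _ ≤ (N + 1) * c := by push_cast; linarith

lemma List.lt_length_of_getD_ne {α : Type*} {l : List α} {n : ℕ} {x : α} (h : l.getD n x ≠ x) :
    n < l.length :=
  not_le.1 fun hn => h (List.getD_eq_default _ _ hn)

namespace LECond

variable {b : ℕ → ℕ}

lemma inQ.mono {p : LECond b} {k k' : ℕ} (hp : p.inQ k) (hk : k ≤ k') : p.inQ k' :=
  fun n hn => (hp n hn).trans (mul_le_mul_of_nonneg_left (decay_mono n hk) (Nat.cast_nonneg _))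

lemma card_union_biUnion_le_of_inQ {r : LECond b} {p : ℕ → LECond b} {K N n : ℕ}
    (hr : r.inQ K) (hp : ∀ j < N, (p j).inQ K) (hpr : ∀ j < N, (p j).d.length ≤ r.d.length)
    (hrn : r.d.length ≤ n) (hn : 2 ^ (K + 1) * (N + 1) ≤ n) :
    (#(r.φ n ∪ (range N).biUnion fun j => (p j).φ n) : ℝ) ≤ b n * decay (K + 1) n :=
  calc (#(r.φ n ∪ (range N).biUnion fun j => (p j).φ n) : ℝ)
      ≤ (N + 1) * (b n * decay K n) :=
        card_union_biUnion_le (hr n hrn) fun j hj => hp j hj n ((hpr j hj).trans hrn)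
    _ = b n * (((N + 1 : ℕ) : ℝ) * decay K n) := by push_cast; ring
    _ ≤ b n * decay (K + 1) n :=
        mul_le_mul_of_nonneg_left (mul_decay_le_decay_succ hn) (Nat.cast_nonneg _)

def enlarge (r : LECond b) (ψ : ℕ → Finset ℕ) (hψ : ∀ n, ψ n ⊆ range (b n)) (k : ℕ)
    (hk : ∀ n, r.d.length ≤ n → (#(r.φ n ∪ ψ n) : ℝ) ≤ b n * decay k n) : LECond b where
  d := r.d
  s := r.s
  φ n := r.φ n ∪ ψ n
  s_lt := r.s_lt
  φ_sub n := union_subset (r.φ_sub n) (hψ n)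
  bound := ⟨k, hk⟩

variable {r : LECond b} {ψ : ℕ → Finset ℕ} {hψ : ∀ n, ψ n ⊆ range (b n)} {k : ℕ}
  {hk : ∀ n, r.d.length ≤ n → (#(r.φ n ∪ ψ n) : ℝ) ≤ b n * decay k n}

lemma enlarge_le : (r.enlarge ψ hψ k hk).le r :=
  ⟨List.prefix_refl _, fun _ _ => rfl, fun _ => subset_union_left, fun _ h h' => absurd h h'⟩

/-- Only the first `|r.d|` coordinates of `p'.φ` matter for the promises that `r` keeps. -/
lemma enlarge_le_of_le {p p' : LECond b} (hrp : r.le p) (hd : p'.d = p.d)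
    (hs : ∀ n < p.d.length, p'.s n = p.s n) (hφ : ∀ n < r.d.length, p'.φ n = p.φ n)
    (hψ' : ∀ n, p'.φ n ⊆ ψ n) : (r.enlarge ψ hψ k hk).le p' := by
  obtain ⟨hpre, hrs, -, hnew⟩ := hrp
  refine ⟨hd ▸ hpre, fun n hn => ?_, fun n => (hψ' n).trans subset_union_right, fun n h h' => ?_⟩
  · rw [hs n (hd ▸ hn)]
    exact hrs n (hd ▸ hn)
  · change r.d.getD n false = true at h
    change r.s n ∉ p'.φ n
    rw [hφ n (List.lt_length_of_getD_ne (by rw [h]; decide))]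
    exact hnew n h (hd ▸ h')

end LECond

theorem stmt9_general (b : ℕ → ℕ)
    (d : List Bool) (s : ℕ → ℕ) (k : ℕ)
    (D : Ultrafilter ℕ)
    (N : ℕ)
    (q : ℕ → ℕ → LECond b) (hq : ∀ j < N, ∀ m, (q j m).inQds d s k)
    (pinf : ℕ → LECond b)
    (hpd : ∀ j < N, (pinf j).d = d)
    (hps : ∀ j < N, ∀ n < d.length, (pinf j).s n = s n)
    (hlim : ∀ j < N, ∀ n : ℕ, {m : ℕ | (q j m).φ n = (pinf j).φ n} ∈ D)
    (r : LECond b) (hr : ∀ j < N, r.le (pinf j)) :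
    {m : ℕ | ∃ q' : LECond b, q'.le r ∧ ∀ j < N, q'.le (q j m)} ∈ D := by
  obtain ⟨kr, hkr⟩ : ∃ kr, r.inQ kr := r.bound
  set K := max kr k
  set L := max (2 ^ (K + 1) * (N + 1)) r.d.length
  have hagree : ∀ᶠ m in (D : Filter ℕ), ∀ n < L, ∀ j < N, (q j m).φ n = (pinf j).φ n :=
    (Filter.eventually_all_finite (Set.finite_lt_nat L)).2 fun n _ =>
      (Filter.eventually_all_finite (Set.finite_lt_nat N)).2 fun j hj => hlim j hj n
  filter_upwards [hagree] with m hm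
  set ψ : ℕ → Finset ℕ := fun n => (range N).biUnion fun j => (q j m).φ n
  have hψ : ∀ n, ψ n ⊆ range (b n) := fun n => biUnion_subset.2 fun j _ => (q j m).φ_sub n
  have hbound : ∀ n, r.d.length ≤ n → (#(r.φ n ∪ ψ n) : ℝ) ≤ b n * decay (K + 1) n := by
    intro n hrn
    rcases lt_or_ge n L with hnL | hLn
    · have hψr : ψ n ⊆ r.φ n := biUnion_subset.2 fun j hj => by
        rw [hm n hnL j (mem_range.1 hj)]
        exact (hr j (mem_range.1 hj)).2.2.1 n
      rw [union_eq_left.2 hψr]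
      exact hkr.mono ((le_max_left kr k).trans K.le_succ) n hrn
    · refine LECond.card_union_biUnion_le_of_inQ (hkr.mono (le_max_left kr k))
        (fun j hj => (hq j hj m).2.2.mono (le_max_right kr k)) (fun j hj => ?_) hrn
        (le_of_max_le_left hLn)
      rw [(hq j hj m).1, ← hpd j hj]
      exact (hr j hj).1.length_le
  refine ⟨r.enlarge ψ hψ (K + 1) hbound, LECond.enlarge_le, fun j hj => ?_⟩
  obtain ⟨hqd, hqs, -⟩ := hq j hj m
  refine LECond.enlarge_le_of_le (hr j hj) (hqd.trans (hpd j hj).symm) (fun n hn => ?_)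
    (fun n hn => hm n (hn.trans_le (le_max_right _ _)) j hj)
    (fun n => subset_biUnion_of_mem (fun j => (q j m).φ n) (mem_range.2 hj))
  rw [hpd j hj] at hn
  rw [hqs n hn, hps j hj n hn]

/-- The key property of `D`-limits in `Q_{d,s,k}` (forcing-free form of `D`-lim-linked):
if `r` extends the `D`-limits `(d,s,φ^j_∞)` of the sequences `(q j m)_m` for all `j < N`,
then the set of `m` such that `r` and all `q j m` (`j < N`) have a common extension
belongs to `D`. -/
theorem stmt9 (b : ℕ → ℕ) (hb : ∀ n, 2 ^ n ≤ b n)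
    (d : List Bool) (s : ℕ → ℕ) (k : ℕ)
    (D : Ultrafilter ℕ) (hD : ∀ m : ℕ, D ≠ pure m)
    (N : ℕ) (hN : 1 ≤ N)
    (q : ℕ → ℕ → LECond b) (hq : ∀ j < N, ∀ m, (q j m).inQds d s k)
    (pinf : ℕ → LECond b)
    (hpd : ∀ j < N, (pinf j).d = d)
    (hps : ∀ j < N, ∀ n < d.length, (pinf j).s n = s n)
    (hlim : ∀ j < N, ∀ n : ℕ, {m : ℕ | (q j m).φ n = (pinf j).φ n} ∈ D)
    (r : LECond b) (hr : ∀ j < N, r.le (pinf j)) :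
    {m : ℕ | ∃ q' : LECond b, q'.le r ∧ ∀ j < N, q'.le (q j m)} ∈ D :=
  stmt9_general b d s k D N q hq pinf hpd hps hlim r hr
end

section
/- For every LE-condition p and every rational ε with 0 < ε < 1, there exist k ∈ ℕ, a finite binary sequence d that is long for k with 1/|d| ≤ ε, a function s, and φ such that (d,s,φ) ∈ Q_{d,s,k} and (d,s,φ) ≤ p in the extension order. (That is, for each ε the union of the components Q_{d,s,k} with d long for k and 1/|d| ≤ ε is dense in the poset LE_b.) -/
open scoped Classical

/-- For each rational `ε ∈ (0,1)`, the union of the components `Q_{d,s,k}` with `d` long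
for `k` and `1/|d| ≤ ε` is dense in the poset `LE_b`. -/
theorem stmt12 (b : ℕ → ℕ) (hb : ∀ n, 2 ^ n ≤ b n)
    (p : LECond b) (ε : ℚ) (hε0 : 0 < ε) (hε1 : ε < 1) :
    ∃ (q : LECond b) (k : ℕ), LongFor k q.d ∧ (1 : ℚ) / (q.d.length : ℚ) ≤ ε ∧
      q.inQ k ∧ q.le p := by
  obtain ⟨k, hk⟩ := p.bound
  set r : ℝ := (2 : ℝ) ^ (-(1 : ℝ) / (2 : ℝ) ^ k) with hr_def
  have hr0 : 0 < r := Real.rpow_pos_of_pos (by norm_num) _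
  have hr1 : r < 1 := by
    apply Real.rpow_lt_one_of_one_lt_of_neg (by norm_num)
    have : (0 : ℝ) < (2 : ℝ) ^ k := by positivity
    rw [div_neg_iff]; right; constructor <;> [norm_num; exact this]
  have hrpow : ∀ n : ℕ, (2 : ℝ) ^ (-(n : ℝ) / (2 : ℝ) ^ k) = r ^ n := by
    intro n
    rw [hr_def, ← Real.rpow_natCast ((2 : ℝ) ^ (-(1 : ℝ) / (2 : ℝ) ^ k)) n,
      ← Real.rpow_mul (by norm_num)]
    ring_nf
  have htend := tendsto_pow_const_mul_const_pow_of_lt_one 4 hr0.le hr1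
  obtain ⟨N, hN⟩ := Filter.eventually_atTop.mp
    (htend.eventually_lt_const (by norm_num : (0 : ℝ) < 1 / 16))
  set L : ℕ := max (max p.d.length 2) (max (⌈(1 : ℚ) / ε⌉₊) N) with hL_def
  have hLp : p.d.length ≤ L := le_trans (le_max_left _ _) (le_max_left _ _)
  have hL2 : 2 ≤ L := le_trans (le_max_right _ _) (le_max_left _ _)
  have hLN : N ≤ L := le_trans (le_max_right _ _) (le_max_right _ _)
  have hLε : ⌈(1 : ℚ) / ε⌉₊ ≤ L := le_trans (le_max_left _ _) (le_max_right _ _)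
  -- main analytic bound
  have hmain : ∀ n : ℕ, L ≤ n →
      (2 : ℝ) ^ (-(n : ℝ) / (2 : ℝ) ^ k) ≤ 1 / ((n : ℝ) ^ 2 * ((n : ℝ) + 1) ^ 2) := by
    intro n hn
    have hn1 : 1 ≤ n := le_trans (le_trans one_le_two hL2) hn
    have hnR : (1 : ℝ) ≤ (n : ℝ) := by exact_mod_cast hn1
    have hX : (0 : ℝ) < (n : ℝ) ^ 2 * ((n : ℝ) + 1) ^ 2 := by positivity
    rw [hrpow n, le_div_iff₀ hX]
    have h1 : (n : ℝ) + 1 ≤ 2 * n := by linarith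
    have h2 : (n : ℝ) ^ 2 * ((n : ℝ) + 1) ^ 2 ≤ 16 * (n : ℝ) ^ 4 := by nlinarith
    have h3 : (n : ℝ) ^ 4 * r ^ n < 1 / 16 := hN n (le_trans hLN hn)
    have hrn : (0 : ℝ) ≤ r ^ n := by positivity
    nlinarith [mul_le_mul_of_nonneg_right h2 hrn]
  -- the extension condition
  refine ⟨⟨p.d ++ List.replicate (L - p.d.length) false,
      fun n => if n < p.d.length then p.s n else 0, p.φ, ?_, p.φ_sub, ⟨k, ?_⟩⟩, k, ?_, ?_, ?_, ?_⟩
  · -- s_lt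
    intro n _
    by_cases h : n < p.d.length
    · simpa [h] using p.s_lt n h
    · simp only [h, if_neg, if_false]
      calc 0 < 2 ^ n := by positivity
        _ ≤ b n := hb n
  · -- bound
    intro n hn
    simp only [List.length_append, List.length_replicate] at hn
    exact hk n (le_trans (Nat.le_add_right _ _) hn)
  all_goals
    have hlen : (p.d ++ List.replicate (L - p.d.length) false).length = L := by
      simp [Nat.add_sub_cancel' hLp]
  · -- LongFor
    constructor
    · simpa [hlen] using hL2
    · intro n hn
      rw [hlen] at hn
      exact hmain n hn
  · -- 1/|d| ≤ ε
    simp only [hlen]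
    have hL0 : (0 : ℚ) < (L : ℚ) := by
      have : 0 < L := lt_of_lt_of_le two_pos hL2
      exact_mod_cast this
    rw [div_le_iff₀ hL0]
    have h1 : (1 : ℚ) / ε ≤ (⌈(1 : ℚ) / ε⌉₊ : ℚ) := Nat.le_ceil _
    have h2 : ((⌈(1 : ℚ) / ε⌉₊ : ℕ) : ℚ) ≤ (L : ℚ) := by exact_mod_cast hLε
    have := le_trans h1 h2
    rw [div_le_iff₀ hε0] at this
    linarith
  · -- inQ
    intro n hn
    simp only [hlen] at hn
    exact hk n (le_trans hLp hn)
  · -- le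
    refine ⟨List.prefix_append _ _, fun n hn => if_pos hn, fun n => subset_rfl, ?_⟩
    intro n hq hp
    exfalso
    apply hp
    by_cases h : n < p.d.length
    · rwa [List.getD_append _ _ _ _ h] at hq
    · exfalso
      rw [List.getD_append_right _ _ _ _ (le_of_not_gt h),
        List.getD_eq_getElem?_getD, List.getElem?_getD_replicate_default_eq] at hq
      exact Bool.false_ne_true hq
end

section
/- Let μ be the product probability measure on the space 2^ω = ℕ → {0,1} obtained as the infinite product over n ∈ ℕ of the uniform probability measure on {0,1}. Let T be a set of finite binary sequences closed under taking initial segments, let s be a finite binary sequence, and let ε be a real number with 0 ≤ ε < 1. Suppose that for every k ∈ ℕ, the number of t ∈ T of length |s| + k that extend s is at least (1 − ε)·2^k. Then μ({x ∈ 2^ω : s is an initial segment of x and every finite initial segment of x belongs to T}) ≥ (1 − ε)·2^{−|s|}. In particular, the set of branches of T is not μ-null. -/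
open MeasureTheory

namespace Stmt14Aux

def cyl (u : List Bool) : Set (ℕ → Bool) := {x | ∀ i < u.length, x i = u.getD i false}

lemma cyl_measurable (u : List Bool) : MeasurableSet (cyl u) := by
  have h : cyl u = ⋂ i ∈ Finset.range u.length, {x : ℕ → Bool | x i = u.getD i false} := by
    ext x; simp [cyl]
  rw [h]
  exact Finset.measurableSet_biInter _ fun i _ =>
    (measurable_pi_apply i) (measurableSet_singleton _)

lemma cyl_disjoint {u v : List Bool} (hlen : u.length = v.length) (hne : u ≠ v) :
    Disjoint (cyl u) (cyl v) := by
  rw [Set.disjoint_left]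
  intro x hu hv
  apply hne
  apply List.ext_getElem hlen
  intro i h1 h2
  have e1 := hu i h1
  have e2 := hv i h2
  rw [List.getD_eq_getElem u false h1] at e1
  rw [List.getD_eq_getElem v false h2] at e2
  rw [← e1, ← e2]

lemma finite_F (T : Set (List Bool)) (s : List Bool) (k : ℕ) :
    {t | t ∈ T ∧ t.length = s.length + k ∧ s <+: t}.Finite :=
  (List.finite_length_eq Bool (s.length + k)).subset (fun t ht => ht.2.1)

end Stmt14Aux

open Stmt14Aux

/-- Let `μ` be the product probability measure on `2^ω = ℕ → Bool` (the infinite product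
of the fair-coin measure, characterized by giving each cylinder `[u]` measure
`2^{−|u|}`). If `T ⊆ 2^{<ω}` is a tree such that for every `k` the number of `t ∈ T` of
length `|s| + k` extending `s` is at least `(1 − ε)·2^k` (where `0 ≤ ε < 1`), then the
set of branches of `T` through `s` has measure at least `(1 − ε)·2^{−|s|}`; in
particular, the set of branches of `T` is not `μ`-null. -/
theorem stmt14 (μ : MeasureTheory.Measure (ℕ → Bool)) [MeasureTheory.IsProbabilityMeasure μ]
    (hcyl : ∀ u : List Bool,
      μ {x : ℕ → Bool | ∀ i < u.length, x i = u.getD i false} = (2⁻¹ : ENNReal) ^ u.length)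
    (T : Set (List Bool)) (hT : ∀ t ∈ T, ∀ u : List Bool, u <+: t → u ∈ T)
    (s : List Bool) (ε : ℝ) (hε0 : 0 ≤ ε) (hε1 : ε < 1)
    (hcount : ∀ k : ℕ, (1 - ε) * (2 : ℝ) ^ k ≤
      (Set.ncard {t | t ∈ T ∧ t.length = s.length + k ∧ s <+: t} : ℝ)) :
    ENNReal.ofReal ((1 - ε) * (2 : ℝ) ^ (-(s.length : ℤ))) ≤
      μ {x : ℕ → Bool | (∀ i < s.length, x i = s.getD i false) ∧
          ∀ k : ℕ, (List.ofFn fun i : Fin k => x i) ∈ T} ∧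
    μ {x : ℕ → Bool | ∀ k : ℕ, (List.ofFn fun i : Fin k => x i) ∈ T} ≠ 0 := by
  set c : ENNReal := ENNReal.ofReal ((1 - ε) * (2 : ℝ) ^ (-(s.length : ℤ))) with hc
  -- the finite sets of nodes at each level
  set F : ℕ → Set (List Bool) := fun k => {t | t ∈ T ∧ t.length = s.length + k ∧ s <+: t}
    with hF
  have hFfin : ∀ k, (F k).Finite := fun k => finite_F T s k
  -- level-k events
  set E : ℕ → Set (ℕ → Bool) := fun k => ⋃ t ∈ F k, cyl t with hE
  have hEmeas : ∀ k, MeasurableSet (E k) := fun k =>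
    (hFfin k).measurableSet_biUnion (fun t _ => cyl_measurable t)
  -- measure of E k
  have hμE : ∀ k, c ≤ μ (E k) := by
    intro k
    have hEq : E k = ⋃ t ∈ (hFfin k).toFinset, cyl t := by
      simp [hE, Set.Finite.mem_toFinset]
    have hdisj : Set.PairwiseDisjoint ((hFfin k).toFinset : Set (List Bool)) cyl := by
      intro u hu v hv hne
      rw [Set.Finite.coe_toFinset] at hu hv
      exact cyl_disjoint (hu.2.1.trans hv.2.1.symm) hne
    have hsum : μ (E k) = ∑ t ∈ (hFfin k).toFinset, μ (cyl t) := by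
      rw [hEq, measure_biUnion_finset hdisj (fun t _ => cyl_measurable t)]
    have hval : ∀ t ∈ (hFfin k).toFinset, μ (cyl t) = (2⁻¹ : ENNReal) ^ (s.length + k) := by
      intro t ht
      rw [Set.Finite.mem_toFinset] at ht
      rw [show μ (cyl t) = (2⁻¹ : ENNReal) ^ t.length from hcyl t, ht.2.1]
    rw [hsum, Finset.sum_congr rfl hval, Finset.sum_const, nsmul_eq_mul]
    have hcard : ((hFfin k).toFinset.card : ℝ) = ((F k).ncard : ℝ) := by
      rw [Set.ncard_eq_toFinset_card (F k) (hFfin k)]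
    -- turn into a real inequality
    have hreal : (1 - ε) * (2 : ℝ) ^ (-(s.length : ℤ)) ≤
        ((hFfin k).toFinset.card : ℝ) * (2⁻¹ : ℝ) ^ (s.length + k) := by
      have h2 : (2⁻¹ : ℝ) ^ (s.length + k) = ((2 : ℝ) ^ s.length * 2 ^ k)⁻¹ := by
        rw [pow_add, mul_inv, inv_pow, inv_pow]
      have hkey : (1 - ε) * (2 : ℝ) ^ (-(s.length : ℤ)) =
          ((1 - ε) * 2 ^ k) * ((2 : ℝ) ^ s.length * 2 ^ k)⁻¹ := by
        rw [zpow_neg, zpow_natCast]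
        field_simp
      rw [hkey, h2, hcard]
      apply mul_le_mul_of_nonneg_right (hcount k)
      positivity
    calc c ≤ ENNReal.ofReal (((hFfin k).toFinset.card : ℝ) * (2⁻¹ : ℝ) ^ (s.length + k)) :=
            ENNReal.ofReal_le_ofReal hreal
      _ = ((hFfin k).toFinset.card : ENNReal) * (2⁻¹ : ENNReal) ^ (s.length + k) := by
            rw [ENNReal.ofReal_mul (by positivity), ENNReal.ofReal_natCast,
              ENNReal.ofReal_pow (by norm_num),
              show ((2:ℝ)⁻¹) = (2:ℝ)⁻¹ from rfl,
              ENNReal.ofReal_inv_of_pos (by norm_num), ENNReal.ofReal_ofNat]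
  -- E is antitone
  have hanti : Antitone E := by
    apply antitone_nat_of_succ_le
    intro k x hx
    simp only [hE, Set.mem_iUnion] at hx ⊢
    obtain ⟨t, ⟨htT, htlen, hts⟩, hxt⟩ := hx
    refine ⟨t.take (s.length + k), ⟨hT t htT _ (List.take_prefix _ _), ?_, ?_⟩, ?_⟩
    · rw [List.length_take, htlen]; omega
    · rw [List.prefix_take_iff]; exact ⟨hts, by omega⟩
    · intro i hi
      rw [List.length_take, htlen] at hi
      have hi' : i < s.length + k := by omega
      have hi'' : i < t.length := by omega
      rw [List.getD_eq_getElem _ false (by rw [List.length_take]; omega), List.getElem_take]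
      rw [← List.getD_eq_getElem t false hi'']
      exact hxt i (by omega)
  -- intersection is contained in the target set
  have hsub : (⋂ k, E k) ⊆ {x : ℕ → Bool | (∀ i < s.length, x i = s.getD i false) ∧
      ∀ k : ℕ, (List.ofFn fun i : Fin k => x i) ∈ T} := by
    intro x hx
    simp only [Set.mem_iInter] at hx
    have hx0 := hx 0
    simp only [hE, Set.mem_iUnion] at hx0
    obtain ⟨t0, ⟨ht0T, ht0len, ht0s⟩, hxt0⟩ := hx0
    have ht0 : s = t0 := ht0s.eq_of_length (by omega)
    rw [← ht0] at ht0T hxt0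
    have hxs : ∀ i < s.length, x i = s.getD i false := fun i hi => hxt0 i hi
    have hofFn : ∀ n (t : List Bool), t.length = n → (∀ i < n, x i = t.getD i false) →
        (List.ofFn fun i : Fin n => x i) = t := by
      intro n t hlen hagree
      apply List.ext_getElem (by simp [hlen])
      intro i h1 h2
      simp only [List.getElem_ofFn]
      rw [← List.getD_eq_getElem t false h2]
      exact hagree i (by simpa using h1)
    refine ⟨hxs, fun k => ?_⟩
    rcases le_or_gt k s.length with hk | hk
    · -- prefix of s
      have : (List.ofFn fun i : Fin k => x i) = s.take k := by
        apply hofFn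
        · rw [List.length_take]; omega
        · intro i hi
          rw [List.getD_eq_getElem _ false (by rw [List.length_take]; omega),
            List.getElem_take, ← List.getD_eq_getElem s false (by omega)]
          exact hxs i (by omega)
      rw [this]
      exact hT s ht0T _ (List.take_prefix _ _)
    · obtain ⟨m, rfl⟩ : ∃ m, k = s.length + m := ⟨k - s.length, by omega⟩
      have hxm := hx m
      simp only [hE, Set.mem_iUnion] at hxm
      obtain ⟨t, ⟨htT, htlen, hts⟩, hxt⟩ := hxm
      have : (List.ofFn fun i : Fin (s.length + m) => x i) = t := by
        apply hofFn _ _ htlen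
        intro i hi
        exact hxt i (by omega)
      rw [this]; exact htT
  -- continuity from above
  have hlim : c ≤ μ (⋂ k, E k) := by
    have htend := MeasureTheory.tendsto_measure_iInter_atTop
      (fun k => (hEmeas k).nullMeasurableSet) hanti ⟨0, measure_ne_top μ _⟩
    exact ge_of_tendsto' htend hμE
  have hmain : c ≤ μ {x : ℕ → Bool | (∀ i < s.length, x i = s.getD i false) ∧
      ∀ k : ℕ, (List.ofFn fun i : Fin k => x i) ∈ T} :=
    hlim.trans (measure_mono hsub)
  refine ⟨hmain, ?_⟩
  have hpos : 0 < c := by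
    rw [hc]
    apply ENNReal.ofReal_pos.mpr
    have : (0:ℝ) < 1 - ε := by linarith
    positivity
  intro h0
  have : c ≤ μ {x : ℕ → Bool | ∀ k : ℕ, (List.ofFn fun i : Fin k => x i) ∈ T} :=
    hmain.trans (measure_mono (fun x hx => hx.2))
  rw [h0] at this
  exact absurd this (by simpa using hpos.ne')
end

section
/- Let μ be an uncountable cardinal, let Γ be a set with ℵ₁ ≤ μ ≤ #Γ ≤ 2^μ, and let (T_ξ)_{ξ∈Γ} be a family of nonempty sets with #T_ξ ≤ μ for each ξ ∈ Γ. Then there exists a set H of (total) functions h with h(ξ) ∈ T_ξ for all ξ ∈ Γ, such that #H ≤ μ^{ℵ₀} and every partial function f whose domain is a countable subset of Γ and which satisfies f(ξ) ∈ T_ξ for all ξ in its domain extends to some h ∈ H (i.e., H is a complete set of guardrails). -/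
universe u

/-- Existence of a complete set of guardrails: if `ℵ₁ ≤ μ ≤ #Γ ≤ 2^μ` and each `T ξ` is
nonempty of cardinality `≤ μ`, then there is a set `H` of total choice functions, of
cardinality `≤ μ^{ℵ₀}`, such that every partial choice function with countable domain
extends to a member of `H`. -/
theorem stmt15 (μ : Cardinal.{u}) (hμ : Cardinal.aleph0 < μ)
    (Γ : Type u) (T : Γ → Type u)
    (hne : ∀ ξ, Nonempty (T ξ)) (hT : ∀ ξ, Cardinal.mk (T ξ) ≤ μ)
    (h1 : Cardinal.aleph 1 ≤ μ) (h2 : μ ≤ Cardinal.mk Γ)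
    (h3 : Cardinal.mk Γ ≤ 2 ^ μ) :
    ∃ H : Set ((ξ : Γ) → T ξ), Cardinal.mk H ≤ μ ^ Cardinal.aleph0 ∧
      ∀ S : Set Γ, S.Countable → ∀ f : (ξ : S) → T ξ,
        ∃ h ∈ H, ∀ ξ : S, h ξ = f ξ := by
  classical
  set M : Type u := μ.out with hMdef
  have hM : Cardinal.mk M = μ := Cardinal.mk_out μ
  have hMne : Nonempty M := by
    rw [← Cardinal.mk_ne_zero_iff, hM]
    exact (Cardinal.aleph0_pos.trans hμ).ne'
  -- surjections from M onto each T ξ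
  have hsurj : ∀ ξ, ∃ g : M → T ξ, Function.Surjective g := by
    intro ξ
    obtain ⟨emb⟩ := (Cardinal.le_def (T ξ) M).mp (by rw [hM]; exact hT ξ)
    exact ⟨Function.invFun emb, fun t => ⟨emb t, Function.leftInverse_invFun emb.injective t⟩⟩
  choose g hg using hsurj
  -- embedding of Γ into M → Bool
  obtain ⟨e, he⟩ : ∃ e : Γ → (M → Bool), Function.Injective e := by
    have : Cardinal.mk Γ ≤ Cardinal.mk (M → Bool) := by
      rw [Cardinal.mk_arrow]
      simpa [hM] using h3
    obtain ⟨emb⟩ := (Cardinal.le_def Γ (M → Bool)).mp this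
    exact ⟨emb, emb.injective⟩
  -- the guardrail map
  let X : Type u := M × (ℕ → ULift.{u} Bool) × M
  let Φ : (ℕ → X) → ((ξ : Γ) → T ξ) := fun x ξ =>
    if hn : ∃ n, ∀ m, e ξ (x m).1 = ((x n).2.1 m).down then g ξ ((x (Nat.find hn)).2.2)
    else (hne ξ).some
  have hμκ : μ ≤ μ ^ Cardinal.aleph0 := Cardinal.self_le_power μ Cardinal.one_le_aleph0
  have hκ : Cardinal.aleph0 ≤ μ ^ Cardinal.aleph0 := hμ.le.trans hμκ
  refine ⟨Set.range Φ, ?_, ?_⟩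
  · have h2μ : (2 : Cardinal.{u}) ≤ μ := by
      exact_mod_cast (Cardinal.nat_lt_aleph0 2).le.trans hμ.le
    have hX : Cardinal.mk X ≤ μ ^ Cardinal.aleph0 := by
      have hP : Cardinal.mk (ℕ → ULift.{u} Bool) = 2 ^ Cardinal.aleph0 := by
        rw [Cardinal.mk_arrow]; simp
      show Cardinal.mk (M × (ℕ → ULift.{u} Bool) × M) ≤ μ ^ Cardinal.aleph0
      rw [Cardinal.mk_prod, Cardinal.mk_prod]
      simp only [Cardinal.lift_id, hM, hP]
      calc μ * (2 ^ Cardinal.aleph0 * μ)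
          ≤ (μ ^ Cardinal.aleph0) * ((μ ^ Cardinal.aleph0) * (μ ^ Cardinal.aleph0)) := by
            gcongr
            · exact Cardinal.power_le_power_right h2μ
        _ = μ ^ Cardinal.aleph0 := by
            rw [Cardinal.mul_eq_self hκ, Cardinal.mul_eq_self hκ]
    calc Cardinal.mk (Set.range Φ)
        ≤ Cardinal.mk (ℕ → X) := Cardinal.mk_range_le
      _ = Cardinal.mk X ^ Cardinal.aleph0 := by rw [Cardinal.mk_arrow]; simp
      _ ≤ (μ ^ Cardinal.aleph0) ^ Cardinal.aleph0 := Cardinal.power_le_power_right hX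
      _ = μ ^ (Cardinal.aleph0 * Cardinal.aleph0) := (Cardinal.power_mul).symm
      _ = μ ^ Cardinal.aleph0 := by rw [Cardinal.aleph0_mul_aleph0]
  · intro S hS f
    rcases S.eq_empty_or_nonempty with hSe | hSne
    · refine ⟨Φ (fun _ => ⟨hMne.some, fun _ => ⟨true⟩, hMne.some⟩),
        Set.mem_range_self _, fun ξ => absurd ξ.2 (by simp [hSe])⟩
    · have : Countable S := hS.to_subtype
      have : Nonempty S := hSne.to_subtype
      obtain ⟨s, hs⟩ := exists_surjective_nat S
      -- separating coordinates
      have hd : ∀ i j : ℕ, ∃ d : M, e (s i) ≠ e (s j) → e (s i) d ≠ e (s j) d := by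
        intro i j
        by_cases hij : e (s i) = e (s j)
        · exact ⟨hMne.some, fun h => absurd hij h⟩
        · obtain ⟨d, hd⟩ := Function.ne_iff.mp hij
          exact ⟨d, fun _ => hd⟩
      choose d hdspec using hd
      let a : ℕ → M := fun k => d (Nat.unpair k).1 (Nat.unpair k).2
      let v : ℕ → M := fun n => (hg (s n) (f (s n))).choose
      have hvspec : ∀ n, g (s n) (v n) = f (s n) := fun n => (hg (s n) (f (s n))).choose_spec
      let x : ℕ → X := fun k => ⟨a k, fun m => ⟨e (s k) (a m)⟩, v k⟩
      refine ⟨Φ x, Set.mem_range_self _, ?_⟩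
      intro ξ
      obtain ⟨n, hn⟩ := hs ξ
      have hex : ∃ n', ∀ m, e (ξ : Γ) (x m).1 = ((x n').2.1 m).down :=
        ⟨n, fun m => by show e (ξ : Γ) (a m) = e (s n : Γ) (a m); rw [hn]⟩
      have hΦ : Φ x (ξ : Γ) = g (ξ : Γ) ((x (Nat.find hex)).2.2) := dif_pos hex
      set n₀ := Nat.find hex with hn₀
      have hagree : ∀ m, e (ξ : Γ) (a m) = e (s n₀ : Γ) (a m) := Nat.find_spec hex
      have heq : e (ξ : Γ) = e (s n₀ : Γ) := by
        by_contra hne'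
        have hne'' : e (s n : Γ) ≠ e (s n₀ : Γ) := by rwa [hn]
        have hsep := hdspec n n₀ hne''
        have h2' := hagree (Nat.pair n n₀)
        have h2'' : e (ξ : Γ) (d n n₀) = e (s n₀ : Γ) (d n n₀) := by
          simpa [a, Nat.unpair_pair] using h2'
        rw [hn] at hsep
        exact hsep h2''
      have hsn₀ : s n₀ = ξ := Subtype.coe_injective (he heq).symm
      have hfin := hvspec n₀
      rw [hsn₀] at hfin
      exact hΦ.trans hfin
end
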